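/- arXiv:2211.16269 — 2 statements merged into one kernel-verified Lean document; each statement's English description precedes it below -/
import Mathlib

section
/- Let A ⊆ ℕ be a central set (a member of some minimal idempotent ultrafilter on (βℕ, ⊕)). Then there exist functions α from finite subsets of ℕ^ℕ to ℕ and H from finite subsets of ℕ^ℕ to finite subsets of ℕ such that: (1) max H(F) < min H(G) whenever F ⊊ G; (2) for every chain G_1 ⊊ G_2 ⊊ ... ⊊ G_n of finite subsets of ℕ^ℕ and every choice f_i ∈ G_i, the sum ∑_{i=1}^n ( α(G_i) + ∑_{t ∈ H(G_i)} f_i(t) ) belongs to A. -/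
/-- The extension of addition on ℕ to ultrafilters:
`A ∈ uadd U V ↔ {n | {m | m + n ∈ A} ∈ V} ∈ U`. -/
def uadd (U V : Ultrafilter ℕ) : Ultrafilter ℕ :=
  U.bind fun n => V.map fun m => m + n

/-- A (nonempty) left ideal of `(βℕ, ⊕)`. -/
def IsLeftIdeal (L : Set (Ultrafilter ℕ)) : Prop :=
  L.Nonempty ∧ ∀ U V : Ultrafilter ℕ, V ∈ L → uadd U V ∈ L

/-- A minimal left ideal of `(βℕ, ⊕)`. -/
def IsMinimalLeftIdeal (L : Set (Ultrafilter ℕ)) : Prop :=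
  IsLeftIdeal L ∧ ∀ L' : Set (Ultrafilter ℕ), IsLeftIdeal L' → L' ⊆ L → L' = L

/-- A minimal ultrafilter: a member of some minimal left ideal of `(βℕ, ⊕)`. -/
def IsMinimalUltrafilter (U : Ultrafilter ℕ) : Prop :=
  ∃ L : Set (Ultrafilter ℕ), IsMinimalLeftIdeal L ∧ U ∈ L

/-- A central set: a member of some minimal idempotent ultrafilter. -/
def IsCentral (A : Set ℕ) : Prop :=
  ∃ U : Ultrafilter ℕ, IsMinimalUltrafilter U ∧ uadd U U = U ∧ A ∈ U

/-!
Let `p` be a minimal idempotent with `A ∈ p`. Given finitely many `f_i : ℕ → ℕ`, the limits in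
`(βℕ)^ι` of the tuples `(a + ∑ t ∈ H, f_i t)_i` with `H` arbitrarily late form a compact semigroup
`D`, and those with `H` nonempty form an ideal `I` of `D`. The constant tuple `p̄` lies in `D`; if
`v = d + p̄` is an idempotent of `I ∩ (D + p̄)`, then `w = p̄ + v` is idempotent with coordinates in
the minimal left ideal of `p`, so minimality gives `p̄ + w = p̄`, while `p̄ + w = w`. Hence
`p̄ = p̄ + v ∈ I`, which says that every member of `p` is a J-set.

With `A⋆ = {x ∈ A | -x + A ∈ p}`, choose `α F` and `H F` by strong recursion on `F`, applying the
J-property to `A⋆ ∩ ⋂_d (-d + A⋆)`, where `d` runs over the finitely many sums along chains that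
end strictly below `F`, and `H F` is placed beyond all earlier `H G`. Every chain sum then lies in
`A⋆ ⊆ A`.
-/

open Filter

attribute [local instance] Ultrafilter.add Ultrafilter.addSemigroup

lemma uadd_eq_add (U V : Ultrafilter ℕ) : uadd U V = U + V := by
  ext A
  change {n | {m | m + n ∈ A} ∈ V} ∈ U ↔ {n | {m | n + m ∈ A} ∈ V} ∈ U
  simp only [add_comm]

lemma isLeftIdeal_iff {L : Set (Ultrafilter ℕ)} :
    IsLeftIdeal L ↔ L.Nonempty ∧ ∀ U V, V ∈ L → U + V ∈ L := by
  simp only [IsLeftIdeal, uadd_eq_add]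

lemma IsMinimalLeftIdeal.add_eq_self {L : Set (Ultrafilter ℕ)} (hL : IsMinimalLeftIdeal L)
    {p w : Ultrafilter ℕ} (hp : p ∈ L) (hw : w ∈ L) (hww : w + w = w) : p + w = p := by
  have hLw : IsLeftIdeal (Set.range (· + w)) :=
    isLeftIdeal_iff.2 ⟨Set.range_nonempty _, by rintro U _ ⟨y, rfl⟩; exact ⟨U + y, add_assoc _ _ _⟩⟩
  have hLwL : Set.range (· + w) ⊆ L := by
    rintro _ ⟨y, rfl⟩
    exact (isLeftIdeal_iff.1 hL.1).2 y w hw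
  obtain ⟨y, rfl⟩ : p ∈ Set.range (· + w) := hL.2 _ hLw hLwL ▸ hp
  rw [add_assoc, hww]

namespace Ultrafilter

variable {M : Type*}

lemma pure_add_pure [Add M] (x y : M) : (pure x + pure y : Ultrafilter M) = pure (x + y) :=
  rfl

lemma continuous_pure_add [Add M] (x : M) : Continuous (pure x + · : Ultrafilter M → _) :=
  ultrafilterBasis_is_basis.continuous_iff.2 <| Set.forall_mem_range.2 fun s =>
    ultrafilter_isOpen_basic ((x + ·) ⁻¹' s)

lemma mem_closure_pi_iff {ι α : Type*} [Finite ι] {E : Set (ι → Ultrafilter α)}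
    {q : ι → Ultrafilter α} :
    q ∈ closure E ↔ ∀ s : ι → Set α, (∀ i, s i ∈ q i) → ∃ x ∈ E, ∀ i, s i ∈ x i := by
  constructor
  · intro hq s hs
    have hopen : IsOpen (Set.univ.pi fun i => {u : Ultrafilter α | s i ∈ u}) :=
      isOpen_set_pi Set.finite_univ fun i _ => ultrafilter_isOpen_basic (s i)
    obtain ⟨x, hxs, hxE⟩ := mem_closure_iff.1 hq _ hopen (Set.mem_univ_pi.2 hs)
    exact ⟨x, hxE, Set.mem_univ_pi.1 hxs⟩
  · intro h
    refine mem_closure_iff_nhds.2 fun t ht => ?_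
    rw [nhds_pi, Filter.mem_pi] at ht
    obtain ⟨I, -, t', ht', hI⟩ := ht
    have hbasic i : ∃ s ∈ q i, {u : Ultrafilter α | s ∈ u} ⊆ t' i := by
      obtain ⟨_, ⟨s, rfl⟩, hs, hst⟩ := ultrafilterBasis_is_basis.mem_nhds_iff.1 (ht' i)
      exact ⟨s, hs, hst⟩
    choose s hsq hst using hbasic
    obtain ⟨x, hxE, hxs⟩ := h s hsq
    exact ⟨x, hI fun i _ => hst i (hxs i), hxE⟩

variable [AddSemigroup M] {p : Ultrafilter M}

def starSet (p : Ultrafilter M) (A : Set M) : Set M := {x ∈ A | (x + ·) ⁻¹' A ∈ p}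

lemma starSet_subset (A : Set M) : starSet p A ⊆ A := fun _ hx => hx.1

lemma starSet_mem (hp : p + p = p) {A : Set M} (hA : A ∈ p) : starSet p A ∈ p :=
  inter_mem hA (by rwa [← hp] at hA)

lemma preimage_add_starSet_mem (hp : p + p = p) {A : Set M} {x : M} (hx : x ∈ starSet p A) :
    (x + ·) ⁻¹' starSet p A ∈ p := by
  have hxA : ∀ᶠ y in p, ∀ᶠ z in p, x + (y + z) ∈ A :=
    (Ultrafilter.eventually_add p p _).1 (hp.symm ▸ hx.2)
  refine inter_mem hx.2 (hxA.mono fun y hy => ?_)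
  change {z | x + y + z ∈ A} ∈ p
  simp only [add_assoc]
  exact hy

end Ultrafilter

section SumTuples

open Ultrafilter

variable {ι : Type*} (f : ι → ℕ → ℕ)

def sumTuple (a : ℕ) (H : Finset ℕ) : ι → Ultrafilter ℕ := fun i => pure (a + ∑ t ∈ H, f i t)

def sumTuples (P : Finset ℕ → Prop) (m : ℕ) : Set (ι → Ultrafilter ℕ) :=
  {x | ∃ a H, P H ∧ (∀ t ∈ H, m < t) ∧ sumTuple f a H = x}

def sumTupleLimits (P : Finset ℕ → Prop) : Set (ι → Ultrafilter ℕ) :=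
  ⋂ m, closure (sumTuples f P m)

variable {f}

lemma sumTuple_add_sumTuple {a b : ℕ} {H K : Finset ℕ} (hHK : Disjoint H K) :
    sumTuple f a H + sumTuple f b K = sumTuple f (a + b) (H ∪ K) := by
  funext i
  simp only [Pi.add_apply, sumTuple, Ultrafilter.pure_add_pure, Finset.sum_union hHK]
  congr 1
  ring

lemma continuous_sumTuple_add (a : ℕ) (H : Finset ℕ) :
    Continuous (sumTuple f a H + · : (ι → Ultrafilter ℕ) → _) :=
  continuous_pi fun i => (continuous_pure_add _).comp (continuous_apply i)

lemma continuous_tuple_add_right (r : ι → Ultrafilter ℕ) : Continuous (· + r) :=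
  continuous_pi fun i => (Ultrafilter.continuous_add_left (r i)).comp (continuous_apply i)

lemma isClosed_sumTupleLimits (P : Finset ℕ → Prop) : IsClosed (sumTupleLimits f P) :=
  isClosed_iInter fun _ => isClosed_closure

lemma sumTupleLimits_mono {P Q : Finset ℕ → Prop} (hPQ : ∀ H, P H → Q H) :
    sumTupleLimits f P ⊆ sumTupleLimits f Q :=
  Set.iInter_mono fun _ => closure_mono fun _ ⟨a, H, hP, hH, hx⟩ => ⟨a, H, hPQ H hP, hH, hx⟩

lemma add_mem_sumTupleLimits {P Q R : Finset ℕ → Prop}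
    (hPQR : ∀ H K, P H → Q K → Disjoint H K → R (H ∪ K)) {q r : ι → Ultrafilter ℕ}
    (hq : q ∈ sumTupleLimits f P) (hr : r ∈ sumTupleLimits f Q) :
    q + r ∈ sumTupleLimits f R := by
  refine Set.mem_iInter.2 fun m => ?_
  have htranslate : Set.MapsTo (· + r) (sumTuples f P m) (closure (sumTuples f R m)) := by
    rintro _ ⟨a, H, hP, hH, rfl⟩
    refine map_mem_closure (continuous_sumTuple_add a H) (Set.mem_iInter.1 hr (max m (H.sup id))) ?_
    rintro _ ⟨b, K, hQ, hK, rfl⟩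
    have hHK : Disjoint H K := Finset.disjoint_left.2 fun t ht htK =>
      (hK t htK).not_ge ((Finset.le_sup (f := id) ht).trans (le_max_right _ _))
    refine ⟨a + b, H ∪ K, hPQR H K hP hQ hHK, fun t ht => ?_, (sumTuple_add_sumTuple hHK).symm⟩
    rcases Finset.mem_union.1 ht with ht | ht
    · exact hH t ht
    · exact (le_max_left _ _).trans_lt (hK t ht)
  simpa only [closure_closure] using
    map_mem_closure (continuous_tuple_add_right r) (Set.mem_iInter.1 hq m) htranslate

variable [Finite ι]

lemma const_mem_sumTupleLimits (p : Ultrafilter ℕ) :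
    (fun _ => p) ∈ sumTupleLimits f fun _ => True := by
  refine Set.mem_iInter.2 fun m => mem_closure_pi_iff.2 fun s hs => ?_
  obtain ⟨a, ha⟩ := Ultrafilter.nonempty_of_mem ((Filter.iInter_mem).2 hs)
  exact ⟨sumTuple f a ∅, ⟨a, ∅, trivial, by simp, rfl⟩, fun i => by
    simpa [sumTuple] using Set.mem_iInter.1 ha i⟩

lemma sumTupleLimits_nonempty : (sumTupleLimits f Finset.Nonempty).Nonempty := by
  refine ⟨fun i => (hyperfilter ℕ).map (f i), Set.mem_iInter.2 fun m => ?_⟩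
  refine mem_closure_pi_iff.2 fun s hs => ?_
  have hinf : (⋂ i, f i ⁻¹' s i).Infinite := fun hfin =>
    notMem_hyperfilter_of_finite hfin ((Filter.iInter_mem).2 fun i => Ultrafilter.mem_map.1 (hs i))
  obtain ⟨j, hj, hjm⟩ := hinf.exists_gt m
  refine ⟨sumTuple f 0 {j}, ⟨0, {j}, Finset.singleton_nonempty j, by simpa using hjm, rfl⟩,
    fun i => ?_⟩
  simpa [sumTuple] using Set.mem_iInter.1 hj i

end SumTuples

section MinimalIdempotent

variable {ι : Type*} [Finite ι] {f : ι → ℕ → ℕ}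

lemma exists_idempotent_add_mem_sumTupleLimits {u : ι → Ultrafilter ℕ}
    (hu : u ∈ sumTupleLimits f fun _ => True) :
    ∃ d ∈ sumTupleLimits f (fun _ => True),
      d + u ∈ sumTupleLimits f Finset.Nonempty ∧ d + u + (d + u) = d + u := by
  set D := sumTupleLimits f fun _ => True
  set I := sumTupleLimits f Finset.Nonempty
  have hID : I ⊆ D := sumTupleLimits_mono fun _ _ => trivial
  have hDD : ∀ x ∈ D, ∀ y ∈ D, x + y ∈ D := fun _ hx _ hy =>
    add_mem_sumTupleLimits (fun _ _ _ _ _ => trivial) hx hy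
  have hIDI : ∀ x ∈ I, ∀ y ∈ D, x + y ∈ I := fun _ hx _ hy =>
    add_mem_sumTupleLimits (fun _ _ hH _ _ => hH.mono Finset.subset_union_left) hx hy
  obtain ⟨i₀, hi₀⟩ : I.Nonempty := sumTupleLimits_nonempty
  have hcompact : IsCompact (I ∩ (· + u) '' D) :=
    ((isClosed_sumTupleLimits _).inter ((isClosed_sumTupleLimits _).isCompact.image
      (continuous_tuple_add_right u)).isClosed).isCompact
  obtain ⟨_, ⟨hvI, d, hd, rfl⟩, hvv⟩ := exists_idempotent_in_compact_add_subsemigroup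
    continuous_tuple_add_right (I ∩ (· + u) '' D) ⟨i₀ + u, hIDI i₀ hi₀ u hu, i₀, hID hi₀, rfl⟩
    hcompact fun x hx _ ⟨_, d', hd', hy⟩ => by
      subst hy
      exact ⟨hIDI x hx.1 _ (hDD _ hd' _ hu), x + d', hDD _ (hID hx.1) _ hd', add_assoc _ _ _⟩
  exact ⟨d, hd, hvI, hvv⟩

theorem const_mem_sumTupleLimits_of_isMinimalUltrafilter {p : Ultrafilter ℕ}
    (hp : IsMinimalUltrafilter p) (hpp : p + p = p) :
    (fun _ => p) ∈ sumTupleLimits f Finset.Nonempty := by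
  obtain ⟨L, hL, hpL⟩ := hp
  have hLadd := (isLeftIdeal_iff.1 hL.1).2
  set u : ι → Ultrafilter ℕ := fun _ => p
  have hu : u ∈ sumTupleLimits f fun _ => True := const_mem_sumTupleLimits p
  have huu : u + u = u := funext fun _ => hpp
  obtain ⟨d, -, hvI, hvv⟩ := exists_idempotent_add_mem_sumTupleLimits hu
  set v := d + u
  have hvu : v + u = v := by rw [add_assoc, huu]
  have hww : u + v + (u + v) = u + v := by rw [add_assoc, ← add_assoc v, hvu, hvv]
  have huw : u + (u + v) = u := funext fun i =>
    hL.add_eq_self hpL (hLadd _ _ (hLadd _ _ hpL)) (congrFun hww i)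
  rw [← huw, ← add_assoc, huu]
  exact add_mem_sumTupleLimits (fun _ _ _ hK _ => hK.mono Finset.subset_union_right) hu hvI

end MinimalIdempotent

/-- A J-set in the sense of Hindman and Strauss, with the index set `H` beyond a given bound. -/
def IsJSet (B : Set ℕ) : Prop :=
  ∀ (F : Finset (ℕ → ℕ)) (m : ℕ),
    ∃ a H, H.Nonempty ∧ (∀ t ∈ H, m < t) ∧ ∀ f ∈ F, a + ∑ t ∈ H, f t ∈ B

theorem isJSet_of_mem_of_isMinimalUltrafilter {p : Ultrafilter ℕ} (hp : IsMinimalUltrafilter p)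
    (hpp : p + p = p) {B : Set ℕ} (hB : B ∈ p) : IsJSet B := by
  intro F m
  have hlim := Set.mem_iInter.1
    (const_mem_sumTupleLimits_of_isMinimalUltrafilter (f := fun g : F => g.1) hp hpp) m
  obtain ⟨_, ⟨a, H, hne, hm, rfl⟩, hx⟩ :=
    Ultrafilter.mem_closure_pi_iff.1 hlim (fun _ => B) fun _ => hB
  exact ⟨a, H, hne, hm, fun g hg => Ultrafilter.mem_pure.1 (hx ⟨g, hg⟩)⟩

section Construction

attribute [local instance] Classical.propDecidable

/-- The choices made at a finite set `F`: `α F`, `H F`, and all sums along chains ending at `F`. -/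
structure ChainStage where
  shift : ℕ
  support : Finset ℕ
  sums : Finset ℕ

variable (p : Ultrafilter ℕ) (A : Set ℕ) (a : Set ℕ → Finset (ℕ → ℕ) → ℕ → ℕ)
  (H : Set ℕ → Finset (ℕ → ℕ) → ℕ → Finset ℕ)

noncomputable def earlierSums (F : Finset (ℕ → ℕ)) (prev : ∀ G ⊂ F, ChainStage) : Finset ℕ :=
  F.ssubsets.attach.biUnion fun G => (prev G (Finset.mem_ssubsets.1 G.2)).sums

noncomputable def earlierBound (F : Finset (ℕ → ℕ)) (prev : ∀ G ⊂ F, ChainStage) : ℕ :=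
  (F.ssubsets.attach.biUnion fun G => (prev G (Finset.mem_ssubsets.1 G.2)).support).sup id

/-- Keeping only the `d` with `-d + A ∈ p` makes the target `p`-large without any invariant;
when `A = A⋆` and all earlier sums lie in `A`, nothing is discarded. -/
def nextTarget (D : Finset ℕ) : Set ℕ :=
  A ∩ ⋂ d ∈ D.filter fun d => (d + ·) ⁻¹' A ∈ p, (d + ·) ⁻¹' A

noncomputable def nextStage (F : Finset (ℕ → ℕ)) (prev : ∀ G ⊂ F, ChainStage) : ChainStage :=
  let B := nextTarget p A (earlierSums F prev)
  let m := earlierBound F prev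
  { shift := a B F m
    support := H B F m
    sums := (insert 0 (earlierSums F prev) ×ˢ F).image fun q =>
      q.1 + (a B F m + ∑ t ∈ H B F m, q.2 t) }

noncomputable def chainStage : Finset (ℕ → ℕ) → ChainStage :=
  Finset.strongInduction (nextStage p A a H)

variable {p A a H}

lemma le_earlierBound {F G : Finset (ℕ → ℕ)} {prev : ∀ G ⊂ F, ChainStage} (hGF : G ⊂ F)
    {t : ℕ} (ht : t ∈ (prev G hGF).support) : t ≤ earlierBound F prev :=
  Finset.le_sup (f := id)
    (Finset.mem_biUnion.2 ⟨⟨G, Finset.mem_ssubsets.2 hGF⟩, Finset.mem_attach _ _, ht⟩)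

lemma mem_earlierSums_iff {F : Finset (ℕ → ℕ)} {prev : ∀ G ⊂ F, ChainStage} {d : ℕ} :
    d ∈ earlierSums F prev ↔ ∃ G, ∃ hGF : G ⊂ F, d ∈ (prev G hGF).sums := by
  simp [earlierSums]

lemma nextTarget_mem (hA : A ∈ p) (D : Finset ℕ) : nextTarget p A D ∈ p :=
  inter_mem hA ((Filter.biInter_finset_mem _).2 fun _ hd => (Finset.mem_filter.1 hd).2)

lemma chainStage_eq (F : Finset (ℕ → ℕ)) :
    chainStage p A a H F = nextStage p A a H F fun G _ => chainStage p A a H G :=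
  Finset.strongInduction_eq _ F

lemma chainStage_support_nonempty (hA : A ∈ p) (hne : ∀ B ∈ p, ∀ F m, (H B F m).Nonempty)
    (F : Finset (ℕ → ℕ)) : (chainStage p A a H F).support.Nonempty := by
  rw [chainStage_eq]
  exact hne _ (nextTarget_mem hA _) _ _

lemma chainStage_support_lt (hA : A ∈ p) (hgt : ∀ B ∈ p, ∀ F m, ∀ t ∈ H B F m, m < t)
    {G F : Finset (ℕ → ℕ)} (hGF : G ⊂ F) {s t : ℕ} (hs : s ∈ (chainStage p A a H G).support)
    (ht : t ∈ (chainStage p A a H F).support) : s < t := by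
  rw [chainStage_eq F] at ht
  exact (le_earlierBound hGF hs).trans_lt (hgt _ (nextTarget_mem hA _) _ _ t ht)

lemma chainStage_sums_subset (hA : A ∈ p)
    (hmem : ∀ B ∈ p, ∀ F m, ∀ f ∈ F, a B F m + ∑ t ∈ H B F m, f t ∈ B)
    (hAA : ∀ x ∈ A, (x + ·) ⁻¹' A ∈ p) (F : Finset (ℕ → ℕ)) :
    ↑(chainStage p A a H F).sums ⊆ A := by
  induction F using Finset.strongInduction with
  | H F ih =>
    rw [chainStage_eq]
    set prev : ∀ G ⊂ F, ChainStage := fun G _ => chainStage p A a H G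
    have hB := hmem _ (nextTarget_mem hA (earlierSums F prev)) F (earlierBound F prev)
    intro _ hx
    obtain ⟨⟨d, f⟩, hdf, rfl⟩ := Finset.mem_image.1 hx
    obtain ⟨hd, hf⟩ := Finset.mem_product.1 hdf
    specialize hB f hf
    rcases Finset.mem_insert.1 hd with rfl | hd
    · simpa using hB.1
    · obtain ⟨G, hGF, hdG⟩ := mem_earlierSums_iff.1 hd
      exact Set.mem_iInter₂.1 hB.2 d (Finset.mem_filter.2 ⟨hd, hAA d (ih G hGF hdG)⟩)

lemma sum_mem_chainStage_sums (n : ℕ) (G : Fin (n + 1) → Finset (ℕ → ℕ)) (hG : StrictMono G)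
    (f : Fin (n + 1) → ℕ → ℕ) (hf : ∀ i, f i ∈ G i) :
    ∑ i, ((chainStage p A a H (G i)).shift + ∑ t ∈ (chainStage p A a H (G i)).support, f i t) ∈
      (chainStage p A a H (G (Fin.last n))).sums := by
  induction n with
  | zero =>
    rw [Fin.sum_univ_one, show Fin.last 0 = 0 from rfl, chainStage_eq (G 0)]
    exact Finset.mem_image.2
      ⟨(0, f 0), Finset.mem_product.2 ⟨Finset.mem_insert_self _ _, hf 0⟩, zero_add _⟩
  | succ n ih =>
    have hlast := hG (Fin.castSucc_lt_last (Fin.last n))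
    have hprev := ih (G ∘ Fin.castSucc) (hG.comp Fin.strictMono_castSucc) _ fun i => hf i.castSucc
    rw [Fin.sum_univ_castSucc, chainStage_eq (G (Fin.last (n + 1)))]
    refine Finset.mem_image.2 ⟨(_, f (Fin.last (n + 1))), Finset.mem_product.2 ⟨?_, hf _⟩, rfl⟩
    exact Finset.mem_insert_of_mem (mem_earlierSums_iff.2 ⟨_, hlast, hprev⟩)

end Construction

theorem exists_chain_sums_mem_of_forall_isJSet {p : Ultrafilter ℕ} (hpp : p + p = p)
    (hJ : ∀ B ∈ p, IsJSet B) {A : Set ℕ} (hA : A ∈ p) :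
    ∃ (α : Finset (ℕ → ℕ) → ℕ) (H : Finset (ℕ → ℕ) → Finset ℕ),
      (∀ F, (H F).Nonempty) ∧
      (∀ F G : Finset (ℕ → ℕ), F ⊂ G → ∀ s ∈ H F, ∀ t ∈ H G, s < t) ∧
      (∀ n : ℕ, 1 ≤ n → ∀ G : Fin n → Finset (ℕ → ℕ), StrictMono G →
        ∀ f : Fin n → ℕ → ℕ, (∀ i, f i ∈ G i) →
          (∑ i, (α (G i) + ∑ t ∈ H (G i), f i t)) ∈ A) := by
  choose! a H hne hgt hmem using hJ
  set A' := Ultrafilter.starSet p A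
  have hA' : A' ∈ p := Ultrafilter.starSet_mem hpp hA
  refine ⟨fun F => (chainStage p A' a H F).shift, fun F => (chainStage p A' a H F).support,
    chainStage_support_nonempty hA' hne, fun F G hFG s hs t ht =>
      chainStage_support_lt hA' hgt hFG hs ht, ?_⟩
  rintro (_ | n) hn G hG f hf
  · exact absurd hn (by norm_num)
  · exact Ultrafilter.starSet_subset A <|
      chainStage_sums_subset hA' hmem (fun _ hx => Ultrafilter.preimage_add_starSet_mem hpp hx) _
        (sum_mem_chainStage_sums n G hG f hf)

/-- The Central Sets Theorem (De–Hindman–Strauss, 2008 version, for `(ℕ, +)`). -/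
theorem central_sets_theorem (A : Set ℕ) (hA : IsCentral A) :
    ∃ (α : Finset (ℕ → ℕ) → ℕ) (H : Finset (ℕ → ℕ) → Finset ℕ),
      (∀ F, (H F).Nonempty) ∧
      (∀ F G : Finset (ℕ → ℕ), F ⊂ G → ∀ s ∈ H F, ∀ t ∈ H G, s < t) ∧
      (∀ n : ℕ, 1 ≤ n → ∀ G : Fin n → Finset (ℕ → ℕ), StrictMono G →
        ∀ f : Fin n → ℕ → ℕ, (∀ i, f i ∈ G i) →
          (∑ i, (α (G i) + ∑ t ∈ H (G i), f i t)) ∈ A) := by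
  obtain ⟨p, hp, hpp, hA⟩ := hA
  rw [uadd_eq_add] at hpp
  exact exists_chain_sums_mem_of_forall_isJSet hpp
    (fun _ hB => isJSet_of_mem_of_isMinimalUltrafilter hp hpp hB) hA
end

section
/- Let U be a minimal ultrafilter on (βℕ, ⊕). Then every A ∈ U contains arbitrarily long arithmetic progressions: for every ℓ there exist a, d ∈ ℕ with d ≥ 1 such that a, a+d, ..., a+(ℓ−1)d ∈ A. -/
theorem mem_uadd {U V : Ultrafilter ℕ} {A : Set ℕ} :
    A ∈ uadd U V ↔ {n | {m | m + n ∈ A} ∈ V} ∈ U := by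
  change A ∈ Filter.bind (↑U) (fun n => ↑((V.map fun m => m + n))) ↔ _
  rw [Filter.mem_bind']
  simp only [Ultrafilter.mem_coe, Ultrafilter.mem_map]
  rfl

/-- `C` contains an arithmetic progression of length `l`. -/
def HasAP (l : ℕ) (C : Set ℕ) : Prop :=
  ∃ a d : ℕ, 1 ≤ d ∧ ∀ j < l, a + j * d ∈ C

/-- Van der Waerden: any finite coloring of ℕ has a monochromatic `l`-AP. -/
theorem exists_color_ap (l : ℕ) {κ : Type} [Finite κ] [Nonempty κ] (C : ℕ → κ) :
    ∃ c : κ, HasAP l {n | C n = c} := by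
  obtain ⟨a, ha, b, c, hc⟩ := Combinatorics.exists_mono_homothetic_copy (Finset.range l) C
  refine ⟨c, b, a, ha, fun j hj => ?_⟩
  have := hc j (Finset.mem_range.2 hj)
  simpa [smul_eq_mul, Nat.mul_comm, Nat.add_comm] using this

/-- There is an ultrafilter all of whose members contain an `l`-AP. -/
theorem exists_ap_ultrafilter (l : ℕ) :
    ∃ V : Ultrafilter ℕ, ∀ C ∈ V, HasAP l C := by
  have cond : ∀ T : Finset (Set ℕ),
      (↑T : Set (Set ℕ)) ⊆ {D : Set ℕ | ¬ HasAP l Dᶜ} →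
      (⋂₀ (↑T : Set (Set ℕ))).Nonempty := by
    intro T hT
    by_contra hne
    rw [Set.not_nonempty_iff_eq_empty] at hne
    -- every n avoids some D ∈ T; color by that D
    have hcol : ∀ n : ℕ, ∃ D : {D // D ∈ T}, n ∉ (D : Set ℕ) := by
      intro n
      have : n ∉ ⋂₀ (↑T : Set (Set ℕ)) := by rw [hne]; exact Set.notMem_empty n
      rw [Set.mem_sInter] at this
      push_neg at this
      obtain ⟨D, hD, hnD⟩ := this
      exact ⟨⟨D, hD⟩, hnD⟩
    have hTne : Nonempty {D // D ∈ T} := ⟨(hcol 0).choose⟩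
    obtain ⟨c, a, d, hd, hap⟩ :=
      exists_color_ap l (fun n => (hcol n).choose)
    have hc : ¬ HasAP l (c : Set ℕ)ᶜ := hT c.2
    refine hc ⟨a, d, hd, fun j hj => ?_⟩
    have h1 := hap j hj
    have h2 := (hcol (a + j * d)).choose_spec
    rw [h1] at h2
    exact h2
  obtain ⟨F, hF⟩ := Ultrafilter.exists_ultrafilter_of_finite_inter_nonempty
      {D : Set ℕ | ¬ HasAP l Dᶜ} cond
  refine ⟨F, fun C hC => ?_⟩
  by_contra hap
  have h1 : Cᶜ ∈ F := hF (by simpa using hap)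
  exact (Ultrafilter.compl_notMem_iff.2 hC) h1

/-- Every member of a minimal ultrafilter contains arbitrarily long arithmetic
progressions. -/
theorem minimal_ultrafilter_ap (U : Ultrafilter ℕ) (hU : IsMinimalUltrafilter U)
    (A : Set ℕ) (hA : A ∈ U) :
    ∀ l : ℕ, ∃ a d : ℕ, 1 ≤ d ∧ ∀ j < l, a + j * d ∈ A := by
  intro l
  obtain ⟨L, ⟨⟨hLne, hLleft⟩, hLmin⟩, hUL⟩ := hU
  set Γ : Set (Ultrafilter ℕ) := {V | ∀ C ∈ V, HasAP l C} with hΓ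
  -- Γ is a left ideal absorbing set: if V ∈ Γ then uadd W V ∈ Γ
  have hleft : ∀ W V : Ultrafilter ℕ, V ∈ Γ → uadd W V ∈ Γ := by
    intro W V hV C hC
    rw [mem_uadd] at hC
    obtain ⟨n, hn⟩ := Ultrafilter.nonempty_of_mem hC
    obtain ⟨a, d, hd, hap⟩ := hV _ hn
    exact ⟨a + n, d, hd, fun j hj => by
      have := hap j hj
      simpa [Nat.add_comm, Nat.add_assoc, Nat.add_left_comm] using this⟩
  -- Γ is a right ideal: if V ∈ Γ then uadd V W ∈ Γ
  have hright : ∀ V W : Ultrafilter ℕ, V ∈ Γ → uadd V W ∈ Γ := by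
    intro V W hV C hC
    rw [mem_uadd] at hC
    obtain ⟨a, d, hd, hap⟩ := hV _ hC
    have hint : (⋂ j ∈ Finset.range l, {m | m + (a + j * d) ∈ C}) ∈ W := by
      refine (Filter.biInter_finset_mem _).2 fun j hj => ?_
      exact hap j (Finset.mem_range.1 hj)
    obtain ⟨m, hm⟩ := Ultrafilter.nonempty_of_mem hint
    simp only [Set.mem_iInter, Finset.mem_range, Set.mem_setOf_eq] at hm
    refine ⟨m + a, d, hd, fun j hj => ?_⟩
    have := hm j hj
    simpa [Nat.add_assoc] using this
  obtain ⟨V₀, hV₀⟩ := exists_ap_ultrafilter l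
  -- Γ ∩ L is a left ideal contained in L, hence equals L
  have hideal : IsLeftIdeal (Γ ∩ L) := by
    constructor
    · exact ⟨uadd V₀ U, hright V₀ U hV₀, hLleft V₀ U hUL⟩
    · intro W V ⟨hVΓ, hVL⟩
      exact ⟨hleft W V hVΓ, hLleft W V hVL⟩
  have := hLmin (Γ ∩ L) hideal Set.inter_subset_right
  have hUΓ : U ∈ Γ := by
    have h2 : U ∈ Γ ∩ L := by rw [this]; exact hUL
    exact h2.1
  exact hUΓ A hA
end
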